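/- Let Γ = R_n(a,r) with n even, a odd, and 4a ≢ 0 (mod n). Then the only automorphism of CDC(Γ) fixing the first rim cycle S_1 = {u_{i,j} : i ≡ j (mod 2)} pointwise and second rim cycle S_2 setwise is the identity. -/

import Mathlib

open SimpleGraph

/-- The Rose Window graph `R_n(a,r)`. Vertices `Sum.inl i = uᵢ`, `Sum.inr i = vᵢ`. -/
def roseWindow (n : ℕ) (a r : ZMod n) : SimpleGraph (ZMod n ⊕ ZMod n) :=
  SimpleGraph.fromRel (fun x y =>
    match x, y with
    | Sum.inl i, Sum.inl i' => i' = i + 1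
    | Sum.inr i, Sum.inr i' => i' = i + r
    | Sum.inl i', Sum.inr i => i' = i ∨ i' = i + a
    | _, _ => False)

/-- The canonical double cover of a graph. -/
def cdc {V : Type*} (G : SimpleGraph V) : SimpleGraph (V × ZMod 2) where
  Adj x y := G.Adj x.1 y.1 ∧ x.2 ≠ y.2
  symm := ⟨fun x y h => ⟨h.1.symm, h.2.symm⟩⟩
  loopless := ⟨fun x h => h.2 rfl⟩

/-- The automorphism group of a graph, as a subgroup of the permutations of vertices. -/
def autSubgroup {V : Type*} (G : SimpleGraph V) : Subgroup (Equiv.Perm V) where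
  carrier := {σ | ∀ x y, G.Adj (σ x) (σ y) ↔ G.Adj x y}
  one_mem' := by intro x y; rfl
  mul_mem' := by
    intro σ τ hσ hτ x y
    simpa [Equiv.Perm.mul_apply] using (hσ (τ x) (τ y)).trans (hτ x y)
  inv_mem' := by
    intro σ hσ x y
    conv_rhs => rw [← (show σ (σ⁻¹ x) = x from σ.apply_symm_apply x), ← (show σ (σ⁻¹ y) = y from σ.apply_symm_apply y)]
    exact (hσ (σ⁻¹ x) (σ⁻¹ y)).symm

/-!
Every vertex `v_{m,j}` has exactly one neighbour in `S₁`, because `a` is odd, so an automorphism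
fixing `S₁` pointwise moves `v_{m,j}` at most to the other `v`-neighbour of that fixed vertex,
i.e. by `±a`. A vertex `u ∈ S₂` has two `v`-neighbours, each of which may therefore move by
`0` or `a` in a prescribed direction, and `σ u ∈ S₂` must be adjacent to both images. Since
`a`, `2a`, `3a`, `4a` are all nonzero (the odd ones for parity reasons), the only consistent
choice is that nothing moves.
-/

open SimpleGraph

lemma Equiv.Perm.mem_union_of_apply_mem_union {α : Type*} {σ : Equiv.Perm α} {S T : Set α}
    (hS : ∀ x ∈ S, σ x = x) (hT : σ '' T = T) {x : α} (hx : σ x ∈ S ∪ T) : x ∈ S ∪ T := by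
  rcases hx with hx | hx
  · left
    rwa [σ.injective (hS _ hx)] at hx
  · right
    rw [← hT] at hx
    obtain ⟨y, hy, hyx⟩ := hx
    rwa [← σ.injective hyx]

lemma ZMod.natCast_val_eq_cast_of_two_dvd {n : ℕ} (hn : 2 ∣ n) (x : ZMod n) :
    (x.val : ZMod 2) = ZMod.cast x := by
  rcases n with _ | n
  · exact ZMod.natAbs_mod_two x
  · exact ZMod.natCast_val x

lemma ZMod.eq_or_eq_add_one (j k : ZMod 2) : j = k ∨ j = k + 1 := by
  revert j k; decide

lemma eq_of_common_spoke_neighbor {R : Type*} [CommRing R] {a i g x y : R}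
    (h1 : a ≠ 0) (h2 : 2 * a ≠ 0) (h3 : 3 * a ≠ 0) (h4 : 4 * a ≠ 0)
    (hx : x = i + a ∨ x = i) (hy : y = i - a ∨ y = i - a - a)
    (hgx : g = x ∨ g = x + a) (hgy : g = y ∨ g = y + a) : g = i ∧ x = i ∧ y = i - a := by
  rcases hx with rfl | rfl <;> rcases hy with rfl | rfl <;> rcases hgx with rfl | rfl <;>
    rcases hgy with h | h <;> grind

lemma cdc_adj {V : Type*} {G : SimpleGraph V} {x y : V × ZMod 2} :
    (cdc G).Adj x y ↔ G.Adj x.1 y.1 ∧ x.2 ≠ y.2 := Iff.rfl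

section RoseWindow

variable {n : ℕ} {a r : ZMod n}

lemma roseWindow_adj_inl_inr {k m : ZMod n} :
    (roseWindow n a r).Adj (.inl k) (.inr m) ↔ k = m ∨ k = m + a := by
  simp [roseWindow, fromRel_adj]

lemma roseWindow_adj_inr_inl {k m : ZMod n} :
    (roseWindow n a r).Adj (.inr m) (.inl k) ↔ k = m ∨ k = m + a := by
  rw [adj_comm, roseWindow_adj_inl_inr]

-- `p` stands for the parity `i ↦ i.val mod 2`, so `S₁ = {(uᵢ, p i)}` and `S₂ = {(uᵢ, p i + 1)}`.
variable {p : ZMod n → ZMod 2} {σ : Equiv.Perm ((ZMod n ⊕ ZMod n) × ZMod 2)}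

lemma ne_zero_of_parity_add (hp : ∀ x, p (x + a) = p x + 1) : a ≠ 0 := by
  rintro rfl
  simpa using hp 0

lemma three_mul_ne_zero_of_parity_add (hp : ∀ x, p (x + a) = p x + 1) : 3 * a ≠ 0 := by
  intro h
  have h3 : p (0 + 3 * a) = p 0 + 1 := by
    rw [show (0 : ZMod n) + 3 * a = 0 + a + a + a by ring, hp, hp, hp]
    generalize p 0 = t; revert t; decide
  simp [h] at h3

lemma parity_sub (hp : ∀ x, p (x + a) = p x + 1) (x : ZMod n) : p (x - a) = p x + 1 := by
  rw [← sub_add_cancel x a, hp, sub_add_cancel, add_assoc, CharTwo.add_self_eq_zero, add_zero]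

lemma apply_inr_eq_or_eq_sub (hσ : σ ∈ autSubgroup (cdc (roseWindow n a r)))
    (hfix : ∀ i, σ (.inl i, p i) = (.inl i, p i)) (hv : ∀ m j, ∃ m', (σ (.inr m, j)).1 = .inr m')
    {m k : ZMod n} {j : ZMod 2} (hk : k = m ∨ k = m + a) (hkj : p k = j + 1) :
    σ (.inr m, j) = (.inr k, j) ∨ σ (.inr m, j) = (.inr (k - a), j) := by
  obtain ⟨m', hm'⟩ := hv m j
  have hadj : (cdc (roseWindow n a r)).Adj (σ (.inr m, j)) (σ (.inl k, p k)) :=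
    (hσ _ _).mpr ⟨roseWindow_adj_inr_inl.mpr hk, by simp [hkj]⟩
  obtain ⟨j', hj'⟩ : ∃ j', (σ (.inr m, j)).2 = j' := ⟨_, rfl⟩
  rw [hfix, cdc_adj, hm', roseWindow_adj_inr_inl, hj', hkj] at hadj
  obtain ⟨hk', hjj'⟩ := hadj
  have hj : j' = j := (ZMod.eq_or_eq_add_one j' j).resolve_right hjj'
  have hσv : σ (.inr m, j) = (.inr m', j) := Prod.ext hm' (hj'.trans hj)
  rcases hk' with rfl | rfl
  · exact .inl hσv
  · exact .inr (by rw [hσv, add_sub_cancel_right])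

lemma fixes_inl_add_one_and_spokes (hp : ∀ x, p (x + a) = p x + 1) (h2a : 2 * a ≠ 0)
    (h4a : 4 * a ≠ 0) (hσ : σ ∈ autSubgroup (cdc (roseWindow n a r)))
    (hfix : ∀ i, σ (.inl i, p i) = (.inl i, p i))
    (hS2 : ∀ i, ∃ i', σ (.inl i, p i + 1) = (.inl i', p i' + 1))
    (hv : ∀ m j, ∃ m', (σ (.inr m, j)).1 = .inr m') (i : ZMod n) :
    σ (.inl i, p i + 1) = (.inl i, p i + 1) ∧ σ (.inr i, p i) = (.inr i, p i) ∧
      σ (.inr (i - a), p i) = (.inr (i - a), p i) := by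
  have hx := apply_inr_eq_or_eq_sub hσ hfix hv (m := i) (k := i + a) (.inr rfl) (hp i)
  have hy := apply_inr_eq_or_eq_sub hσ hfix hv (m := i - a) (k := i - a) (.inl rfl)
    (parity_sub hp i)
  rw [add_sub_cancel_right] at hx
  obtain ⟨g, hg⟩ := hS2 i
  have hj : p i + 1 ≠ p i := by simp
  have hadj_x := (hσ (.inl i, p i + 1) (.inr i, p i)).mpr
    ⟨roseWindow_adj_inl_inr.mpr (.inl rfl), hj⟩
  have hadj_y := (hσ (.inl i, p i + 1) (.inr (i - a), p i)).mpr
    ⟨roseWindow_adj_inl_inr.mpr (.inr (sub_add_cancel i a).symm), hj⟩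
  obtain ⟨x, hx', hσx⟩ : ∃ x, (x = i + a ∨ x = i) ∧ σ (.inr i, p i) = (.inr x, p i) := by
    rcases hx with h | h <;> exact ⟨_, by simp, h⟩
  obtain ⟨y, hy', hσy⟩ : ∃ y, (y = i - a ∨ y = i - a - a) ∧
      σ (.inr (i - a), p i) = (.inr y, p i) := by
    rcases hy with h | h <;> exact ⟨_, by simp, h⟩
  rw [hg, hσx, cdc_adj, roseWindow_adj_inl_inr] at hadj_x
  rw [hg, hσy, cdc_adj, roseWindow_adj_inl_inr] at hadj_y
  obtain ⟨rfl, rfl, rfl⟩ := eq_of_common_spoke_neighbor (ne_zero_of_parity_add hp) h2a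
    (three_mul_ne_zero_of_parity_add hp) h4a hx' hy' hadj_x.1 hadj_y.1
  exact ⟨hg, hσx, hσy⟩

lemma eq_self_of_fixes_rim (hp : ∀ x, p (x + a) = p x + 1) (h2a : 2 * a ≠ 0) (h4a : 4 * a ≠ 0)
    (hσ : σ ∈ autSubgroup (cdc (roseWindow n a r)))
    (hfix : ∀ i, σ (.inl i, p i) = (.inl i, p i))
    (hS2 : ∀ i, ∃ i', σ (.inl i, p i + 1) = (.inl i', p i' + 1))
    (hv : ∀ m j, ∃ m', (σ (.inr m, j)).1 = .inr m') (x : (ZMod n ⊕ ZMod n) × ZMod 2) :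
    σ x = x := by
  have hspoke := fixes_inl_add_one_and_spokes hp h2a h4a hσ hfix hS2 hv
  obtain ⟨i | m, j⟩ := x
  · rcases ZMod.eq_or_eq_add_one j (p i) with rfl | rfl
    · exact hfix i
    · exact (hspoke i).1
  · rcases ZMod.eq_or_eq_add_one j (p m) with rfl | rfl
    · exact (hspoke m).2.1
    · simpa only [← hp, add_sub_cancel_right] using (hspoke (m + a)).2.2

end RoseWindow

theorem fix_rim_identity_12_general (n a r : ℕ) (hne : Even n) (hao : Odd a) (h4a : ¬ n ∣ 4 * a) :
    let S1 : Set ((ZMod n ⊕ ZMod n) × ZMod 2) :=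
      {p | ∃ (i : ZMod n) (j : ZMod 2), p = (Sum.inl i, j) ∧ ((ZMod.val i : ZMod 2) = j)}
    let S2 : Set ((ZMod n ⊕ ZMod n) × ZMod 2) :=
      {p | ∃ (i : ZMod n) (j : ZMod 2), p = (Sum.inl i, j) ∧ ((ZMod.val i : ZMod 2) ≠ j)}
    ∀ σ ∈ autSubgroup (cdc (roseWindow n a r)),
      (∀ x ∈ S1, σ x = x) → (σ : _ → _) '' S2 = S2 → ∀ x, σ x = x := by
  intro S1 S2 σ hσ h1 h2
  let p : ZMod n → ZMod 2 := fun i => (i.val : ZMod 2)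
  have hp : ∀ x, p (x + a) = p x + 1 := by
    intro x
    simp only [p, ZMod.natCast_val_eq_cast_of_two_dvd hne.two_dvd, ZMod.cast_add hne.two_dvd,
      ZMod.cast_natCast hne.two_dvd, hao.natCast_zmod_two]
  have h4a' : 4 * (a : ZMod n) ≠ 0 := by
    exact_mod_cast (ZMod.natCast_eq_zero_iff _ _).not.mpr h4a
  have h2a' : 2 * (a : ZMod n) ≠ 0 := fun h => h4a' (by linear_combination 2 * h)
  have hS2 : ∀ i, ∃ i', σ (.inl i, p i + 1) = (.inl i', p i' + 1) := by
    intro i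
    obtain ⟨i', j', he, hj'⟩ : σ (.inl i, p i + 1) ∈ S2 :=
      h2 ▸ Set.mem_image_of_mem σ ⟨i, _, rfl, by simp [p]⟩
    obtain rfl := (ZMod.eq_or_eq_add_one j' (p i')).resolve_left (Ne.symm hj')
    exact ⟨i', he⟩
  have hv : ∀ m j, ∃ m', (σ (.inr m, j)).1 = .inr m' := by
    intro m j
    rcases hσv : σ (.inr m, j) with ⟨i | m', j'⟩
    · have hrim : σ (.inr m, j) ∈ S1 ∪ S2 := hσv ▸ (em _).imp (⟨i, j', rfl, ·⟩) (⟨i, j', rfl, ·⟩)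
      rcases σ.mem_union_of_apply_mem_union h1 h2 hrim with ⟨_, _, h, _⟩ | ⟨_, _, h, _⟩ <;>
        simp at h
    · exact ⟨m', rfl⟩
  exact eq_self_of_fixes_rim hp h2a' h4a' hσ (fun i => h1 _ ⟨i, _, rfl, rfl⟩) hS2 hv

/-- under the stated arithmetic conditions, the only automorphism of
`CDC(R_n(a,r))` fixing the rim cycle `S₁` pointwise and `S₂` setwise is the identity. -/
theorem fix_rim_identity_12 (n a r : ℕ) (hn : 3 ≤ n) (hne : Even n) (hao : Odd a) (h4a : ¬ n ∣ 4 * a)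
    (ha : (a : ZMod n) ≠ 0) (hr : (r : ZMod n) ≠ 0) :
    let S1 : Set ((ZMod n ⊕ ZMod n) × ZMod 2) :=
      {p | ∃ (i : ZMod n) (j : ZMod 2), p = (Sum.inl i, j) ∧ ((ZMod.val i : ZMod 2) = j)}
    let S2 : Set ((ZMod n ⊕ ZMod n) × ZMod 2) :=
      {p | ∃ (i : ZMod n) (j : ZMod 2), p = (Sum.inl i, j) ∧ ((ZMod.val i : ZMod 2) ≠ j)}
    ∀ σ ∈ autSubgroup (cdc (roseWindow n a r)),
      (∀ x ∈ S1, σ x = x) → (σ : _ → _) '' S2 = S2 → ∀ x, σ x = x :=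
  fix_rim_identity_12_general n a r hne hao h4a
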